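/- The mutual exclusion implementation L(M) (Algorithm 1), built from any strictly serializable strongly progressive TM implementation M, provides deadlock-freedom: for every execution π containing an invocation of Enter by some process p_i, in every extension of π in which every process takes infinitely many steps, some process is in the critical section. -/
import Mathlib


/-!
A formal model of the mutual exclusion implementation `L(M)` (Algorithm 1 of
Kuznetsov & Ravi, "Progressive Transactional Memory in Time and Space"), built
from a strictly serializable, strongly progressive TM implementation `M` that
accesses the single t-object `X`.

Since `M` is strictly serializable and strongly progressive and every
transaction of `L(M)` accesses only the single t-object `X`, each committed
transaction of `M` takes effect as one atomic step that reads the previous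
value of `X` and writes the identity `[p_i, face_i]` to `X`, whereas an aborted
transaction has no effect (the process retries the while loop).  The model
below represents this: the step `transSuccess` is a committed transaction of
the TM `M` (returning the previous value of `X`) and `transAbort` is an aborted
one.  Everything else of Algorithm 1 (the registers `Done`, `Succ`, `Lock` and
the control flow of the `Entry` and `Exit` operations) is modelled faithfully,
one line per step.

A process is *in the critical section* when its Enter operation has returned
`ok` and it has not yet invoked Exit, i.e., its program counter is `crit`.
-/

/-- Program locations of a process executing Algorithm 1. -/
inductive Loc : Type where
  | idle        -- outside Entry/Exit (remainder section)
  | entry1      -- about to write Done[p, face] := false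
  | entry2      -- about to write Succ[p, face] := ⊥
  | trans       -- in the while loop executing the transaction func() on M
  | lockPred    -- about to write Lock[p][prev.pid] := locked
  | setSucc     -- about to write Succ[prev] := p
  | checkDone   -- about to read Done[prev]
  | spin        -- spinning on Lock[p][prev.pid]
  | crit        -- in the critical section (Enter returned ok)
  | exit1       -- Exit invoked; about to write Done[p, face] := true
  | exit2       -- about to write Lock[Succ[p, face]][p] := unlocked
deriving DecidableEq

/-- A configuration of `L(M)` for `n` processes: the control state and local
variables of each process, and the values of the shared objects (`X`, `Done`,
`Succ`, `Lock`).  `lock p q = true` means the register `Lock[p][q]` is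
`locked`. -/
structure Conf (n : ℕ) where
  pc : Fin n → Loc
  face : Fin n → Bool
  prev : Fin n → Option (Fin n × Bool)
  X : Option (Fin n × Bool)
  done : Fin n → Bool → Bool
  succ : Fin n → Bool → Option (Fin n)
  lock : Fin n → Fin n → Bool

/-- The initial configuration. -/
def initConf (n : ℕ) : Conf n :=
  { pc := fun _ => Loc.idle
    face := fun _ => false
    prev := fun _ => none
    X := none
    done := fun _ _ => false
    succ := fun _ _ => none
    lock := fun _ _ => false }

/-- One step of process `p` in `L(M)`. -/
inductive MStep (n : ℕ) : Fin n → Conf n → Conf n → Prop where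
  /-- `p` invokes Enter: it adopts a new identity `face_p := 1 − face_p`. -/
  | invokeEnter (c : Conf n) (p : Fin n) :
      c.pc p = Loc.idle →
      MStep n p c { c with pc := Function.update c.pc p Loc.entry1,
                           face := Function.update c.face p (!c.face p) }
  /-- no-op step of an idle process (remainder section). -/
  | idleSkip (c : Conf n) (p : Fin n) :
      c.pc p = Loc.idle → MStep n p c c
  /-- Entry line 2: `Done[p, face_p].write(false)`. -/
  | doneWrite (c : Conf n) (p : Fin n) :
      c.pc p = Loc.entry1 →
      MStep n p c { c with pc := Function.update c.pc p Loc.entry2,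
                           done := Function.update c.done p
                             (Function.update (c.done p) (c.face p) false) }
  /-- Entry line 3: `Succ[p, face_p].write(⊥)`. -/
  | succInit (c : Conf n) (p : Fin n) :
      c.pc p = Loc.entry2 →
      MStep n p c { c with pc := Function.update c.pc p Loc.trans,
                           succ := Function.update c.succ p
                             (Function.update (c.succ p) (c.face p) none) }
  /-- The transaction `func()` on `M` aborts (returns `false`); `p` retries. -/
  | transAbort (c : Conf n) (p : Fin n) :
      c.pc p = Loc.trans → MStep n p c c
  /-- The transaction `func()` on `M` commits: atomically `prev_p := X;
  X := [p, face_p]`.  If `prev_p = ⊥`, `p` enters the critical section. -/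
  | transSuccess (c : Conf n) (p : Fin n) :
      c.pc p = Loc.trans →
      MStep n p c { c with
        pc := Function.update c.pc p (if c.X = none then Loc.crit else Loc.lockPred),
        prev := Function.update c.prev p c.X,
        X := some (p, c.face p) }
  /-- `Lock[p][prev.pid].write(locked)`. -/
  | lockWrite (c : Conf n) (p q : Fin n) (f : Bool) :
      c.pc p = Loc.lockPred → c.prev p = some (q, f) →
      MStep n p c { c with pc := Function.update c.pc p Loc.setSucc,
                           lock := Function.update c.lock p
                             (Function.update (c.lock p) q true) }
  /-- `Succ[prev].write(p)`. -/
  | succWrite (c : Conf n) (p q : Fin n) (f : Bool) :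
      c.pc p = Loc.setSucc → c.prev p = some (q, f) →
      MStep n p c { c with pc := Function.update c.pc p Loc.checkDone,
                           succ := Function.update c.succ q
                             (Function.update (c.succ q) f (some p)) }
  /-- read `Done[prev] = true`: `p` enters the critical section. -/
  | doneCheckTrue (c : Conf n) (p q : Fin n) (f : Bool) :
      c.pc p = Loc.checkDone → c.prev p = some (q, f) → c.done q f = true →
      MStep n p c { c with pc := Function.update c.pc p Loc.crit }
  /-- read `Done[prev] = false`: `p` spins on `Lock[p][prev.pid]`. -/
  | doneCheckFalse (c : Conf n) (p q : Fin n) (f : Bool) :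
      c.pc p = Loc.checkDone → c.prev p = some (q, f) → c.done q f = false →
      MStep n p c { c with pc := Function.update c.pc p Loc.spin }
  /-- spin: `Lock[p][prev.pid]` is still `locked`. -/
  | spinLocked (c : Conf n) (p q : Fin n) (f : Bool) :
      c.pc p = Loc.spin → c.prev p = some (q, f) → c.lock p q = true →
      MStep n p c c
  /-- spin: `Lock[p][prev.pid]` is `unlocked`; `p` enters the critical section. -/
  | spinUnlocked (c : Conf n) (p q : Fin n) (f : Bool) :
      c.pc p = Loc.spin → c.prev p = some (q, f) → c.lock p q = false →
      MStep n p c { c with pc := Function.update c.pc p Loc.crit }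
  /-- no-op step of a process inside the critical section. -/
  | critSkip (c : Conf n) (p : Fin n) :
      c.pc p = Loc.crit → MStep n p c c
  /-- `p` invokes Exit. -/
  | invokeExit (c : Conf n) (p : Fin n) :
      c.pc p = Loc.crit →
      MStep n p c { c with pc := Function.update c.pc p Loc.exit1 }
  /-- Exit line 1: `Done[p, face_p].write(true)`. -/
  | exitDone (c : Conf n) (p : Fin n) :
      c.pc p = Loc.exit1 →
      MStep n p c { c with pc := Function.update c.pc p Loc.exit2,
                           done := Function.update c.done p
                             (Function.update (c.done p) (c.face p) true) }
  /-- Exit line 2: `Lock[Succ[p, face_p]][p].write(unlocked)`; Exit returns. -/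
  | exitUnlockSome (c : Conf n) (p q : Fin n) :
      c.pc p = Loc.exit2 → c.succ p (c.face p) = some q →
      MStep n p c { c with pc := Function.update c.pc p Loc.idle,
                           lock := Function.update c.lock q
                             (Function.update (c.lock q) p false) }
  /-- Exit line 2 with no registered successor; Exit returns. -/
  | exitUnlockNone (c : Conf n) (p : Fin n) :
      c.pc p = Loc.exit2 → c.succ p (c.face p) = none →
      MStep n p c { c with pc := Function.update c.pc p Loc.idle }

/-- Configurations reachable in some execution of `L(M)`. -/
def Reachable (n : ℕ) (c : Conf n) : Prop :=
  Relation.ReflTransGen (fun a b => ∃ p, MStep n p a b) (initConf n) c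

/-- Process `p` is in the critical section: its Enter has returned `ok` and it
has not invoked Exit. -/
def inCS {n : ℕ} (c : Conf n) (p : Fin n) : Prop := c.pc p = Loc.crit

/-- An infinite execution of `L(M)`: at time `i` the scheduled process
`sched i` takes one step. -/
structure MRun (n : ℕ) where
  conf : ℕ → Conf n
  sched : ℕ → Fin n
  start : conf 0 = initConf n
  steps : ∀ i, MStep n (sched i) (conf i) (conf (i + 1))

/-- Every process takes infinitely many steps in `R`. -/
def fairRun {n : ℕ} (R : MRun n) : Prop :=
  ∀ p : Fin n, ∀ i, ∃ j, i ≤ j ∧ R.sched j = p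

/-- Process `p` invokes Enter at time `i` of the run `R`. -/
def enterInvokedAt {n : ℕ} (R : MRun n) (i : ℕ) (p : Fin n) : Prop :=
  R.sched i = p ∧ (R.conf i).pc p = Loc.idle ∧ (R.conf (i + 1)).pc p = Loc.entry1

/-- At time `i` the transaction `func()` of the scheduled process commits
(returns the previous value of `X` rather than aborting), terminating its
while loop. -/
def transSuccessAt {n : ℕ} (R : MRun n) (i : ℕ) : Prop :=
  (R.conf i).pc (R.sched i) = Loc.trans ∧
  (R.conf (i + 1)).pc (R.sched i) ≠ Loc.trans

/-- Formal counterpart, at the level of `L(M)`, of the hypothesis that the TM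
`M` is strongly progressive: whenever some process is executing the transaction
`func()` on the single t-object `X`, not all the concurrent transactions abort,
i.e., some process's transaction eventually commits. -/
def stronglyProgressiveRun {n : ℕ} (R : MRun n) : Prop :=
  ∀ i, (∃ p, (R.conf i).pc p = Loc.trans) → ∃ j, i ≤ j ∧ transSuccessAt R j

/-!
STATEMENT 8 (Lemma 4).
The mutual exclusion implementation `L(M)` (Algorithm 1), built from any
strictly serializable strongly progressive TM implementation `M`, provides
deadlock-freedom: for every execution containing an invocation of Enter by
some process `p`, in every extension in which every process takes infinitely
many steps, some process is in the critical section.  (The hypothesis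
`stronglyProgressiveRun R` is the run-level counterpart of the strong
progressiveness of `M`.)
-/
section Lemmas
open Loc
variable {n : ℕ}

/-- Waiting locations. -/
def InW : Loc → Prop := fun l =>
  l = Loc.lockPred ∨ l = Loc.setSucc ∨ l = Loc.checkDone ∨ l = Loc.spin

lemma InW.not_crit {l : Loc} (h : InW l) : l ≠ Loc.crit := by
  rcases h with h|h|h|h <;> subst h <;> simp

-- frame lemmas
lemma pc_frame {a : Fin n} {c c' : Conf n} (h : MStep n a c c') {r : Fin n}
    (hr : r ≠ a) : c'.pc r = c.pc r := by
  cases h <;> simp [Function.update_of_ne hr]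

lemma face_frame {a : Fin n} {c c' : Conf n} (h : MStep n a c c') {r : Fin n}
    (hr : r ≠ a) : c'.face r = c.face r := by
  cases h <;> simp [Function.update_of_ne hr]

lemma prev_frame {a : Fin n} {c c' : Conf n} (h : MStep n a c c') {r : Fin n}
    (hr : r ≠ a) : c'.prev r = c.prev r := by
  cases h <;> simp [Function.update_of_ne hr]

lemma done_frame {a : Fin n} {c c' : Conf n} (h : MStep n a c c') {r : Fin n}
    (hr : r ≠ a) : c'.done r = c.done r := by
  cases h <;> simp [Function.update_of_ne hr]

lemma face_frame2 {a : Fin n} {c c' : Conf n} (h : MStep n a c c')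
    (hpc : c.pc a ≠ Loc.idle) : c'.face = c.face := by
  cases h <;> first | rfl | simp_all

lemma prev_frame2 {a : Fin n} {c c' : Conf n} (h : MStep n a c c')
    (hpc : c.pc a ≠ Loc.trans) : c'.prev = c.prev := by
  cases h <;> first | rfl | simp_all

lemma X_frame2 {a : Fin n} {c c' : Conf n} (h : MStep n a c c')
    (hpc : c.pc a ≠ Loc.trans) : c'.X = c.X := by
  cases h <;> first | rfl | simp_all

lemma done_frame2 {a : Fin n} {c c' : Conf n} (h : MStep n a c c')
    (h1 : c.pc a ≠ Loc.entry1) (h2 : c.pc a ≠ Loc.exit1) : c'.done = c.done := by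
  cases h <;> first | rfl | simp_all

lemma succ_frame2 {a : Fin n} {c c' : Conf n} (h : MStep n a c c')
    (h1 : c.pc a ≠ Loc.entry2) (h2 : c.pc a ≠ Loc.setSucc) : c'.succ = c.succ := by
  cases h <;> first | rfl | simp_all

lemma lock_frame2 {a : Fin n} {c c' : Conf n} (h : MStep n a c c')
    (h1 : c.pc a ≠ Loc.lockPred) (h2 : c.pc a ≠ Loc.exit2) : c'.lock = c.lock := by
  cases h <;> first | rfl | simp_all

end Lemmas
section Inv
variable {n : ℕ} {a : Fin n} {c c' : Conf n}

lemma inv_entry1 (h : MStep n a c c') (hpc : c.pc a = Loc.entry1) :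
    c'.pc a = Loc.entry2 ∧
    c'.done = Function.update c.done a
      (Function.update (c.done a) (c.face a) false) := by
  cases h <;> simp_all

lemma inv_entry2 (h : MStep n a c c') (hpc : c.pc a = Loc.entry2) :
    c'.pc a = Loc.trans ∧
    c'.succ = Function.update c.succ a
      (Function.update (c.succ a) (c.face a) none) := by
  cases h <;> simp_all

lemma inv_lockPred {q : Fin n} {f : Bool} (h : MStep n a c c')
    (hpc : c.pc a = Loc.lockPred) (hprev : c.prev a = some (q, f)) :
    c'.pc a = Loc.setSucc ∧
    c'.lock = Function.update c.lock a (Function.update (c.lock a) q true) := by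
  cases h <;> simp_all

lemma inv_setSucc {q : Fin n} {f : Bool} (h : MStep n a c c')
    (hpc : c.pc a = Loc.setSucc) (hprev : c.prev a = some (q, f)) :
    c'.pc a = Loc.checkDone ∧
    c'.succ = Function.update c.succ q
      (Function.update (c.succ q) f (some a)) := by
  cases h <;> simp_all

lemma inv_checkDone {q : Fin n} {f : Bool} (h : MStep n a c c')
    (hpc : c.pc a = Loc.checkDone) (hprev : c.prev a = some (q, f)) :
    (c.done q f = true ∧ c'.pc a = Loc.crit) ∨
    (c.done q f = false ∧ c'.pc a = Loc.spin) := by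
  cases h <;> simp_all

lemma inv_spin {q : Fin n} {f : Bool} (h : MStep n a c c')
    (hpc : c.pc a = Loc.spin) (hprev : c.prev a = some (q, f)) :
    (c.lock a q = true ∧ c' = c) ∨
    (c.lock a q = false ∧ c'.pc a = Loc.crit) := by
  cases h <;> simp_all

lemma inv_crit (h : MStep n a c c') (hpc : c.pc a = Loc.crit) :
    c' = c ∨ c'.pc a = Loc.exit1 := by
  cases h <;> simp_all

lemma inv_idle (h : MStep n a c c') (hpc : c.pc a = Loc.idle) :
    c' = c ∨ (c'.pc a = Loc.entry1 ∧ c'.face a = !c.face a) := by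
  cases h <;> simp_all

lemma inv_trans (h : MStep n a c c') (hpc : c.pc a = Loc.trans) :
    c' = c ∨
    (c'.pc a = (if c.X = none then Loc.crit else Loc.lockPred) ∧
     c'.prev a = c.X ∧ c'.X = some (a, c.face a) ∧
     c'.done = c.done ∧ c'.succ = c.succ ∧ c'.lock = c.lock ∧
     c'.face = c.face ∧ (∀ r, r ≠ a → c'.pc r = c.pc r) ∧
     (∀ r, r ≠ a → c'.prev r = c.prev r)) := by
  cases h <;> first
    | (left; rfl)
    | simp_all
    | (right; refine ⟨by simp, by simp, rfl, rfl, rfl, rfl, rfl,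
        fun r hr => by simp [Function.update_of_ne hr],
        fun r hr => by simp [Function.update_of_ne hr]⟩)

lemma inv_exit1 (h : MStep n a c c') (hpc : c.pc a = Loc.exit1) :
    c'.pc a = Loc.exit2 ∧
    c'.done = Function.update c.done a
      (Function.update (c.done a) (c.face a) true) := by
  cases h <;> simp_all

lemma inv_exit2 (h : MStep n a c c') (hpc : c.pc a = Loc.exit2) :
    c'.pc a = Loc.idle ∧
    ((∃ z, c.succ a (c.face a) = some z ∧
        c'.lock = Function.update c.lock z (Function.update (c.lock z) a false)) ∨
      (c.succ a (c.face a) = none ∧ c'.lock = c.lock)) := by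
  cases h <;> simp_all

end Inv
section RunBasic
variable {n : ℕ} (R : MRun n)

lemma run_pc_frame {t : ℕ} {r : Fin n} (hr : r ≠ R.sched t) :
    (R.conf (t+1)).pc r = (R.conf t).pc r := pc_frame (R.steps t) hr

lemma pc_changed {t : ℕ} {r : Fin n}
    (h : (R.conf (t+1)).pc r ≠ (R.conf t).pc r) : R.sched t = r := by
  by_contra hne
  exact h (run_pc_frame R (fun he => hne he.symm))

lemma commit_effect {t : ℕ} (h : transSuccessAt R t) :
    (R.conf (t+1)).pc (R.sched t)
        = (if (R.conf t).X = none then Loc.crit else Loc.lockPred) ∧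
    (R.conf (t+1)).prev (R.sched t) = (R.conf t).X ∧
    (R.conf (t+1)).X = some (R.sched t, (R.conf t).face (R.sched t)) ∧
    (R.conf (t+1)).done = (R.conf t).done ∧
    (R.conf (t+1)).succ = (R.conf t).succ ∧
    (R.conf (t+1)).lock = (R.conf t).lock ∧
    (R.conf (t+1)).face = (R.conf t).face ∧
    (∀ r, r ≠ R.sched t → (R.conf (t+1)).pc r = (R.conf t).pc r) ∧
    (∀ r, r ≠ R.sched t → (R.conf (t+1)).prev r = (R.conf t).prev r) := by
  obtain ⟨h1, h2⟩ := h
  rcases inv_trans (R.steps t) h1 with he | hiv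
  · exact absurd (by rw [he]; exact h1) h2
  · exact ⟨hiv.1, hiv.2.1, hiv.2.2.1, hiv.2.2.2.1, hiv.2.2.2.2.1,
      hiv.2.2.2.2.2.1, hiv.2.2.2.2.2.2.1, hiv.2.2.2.2.2.2.2.1,
      hiv.2.2.2.2.2.2.2.2⟩

lemma not_commit_X {t : ℕ} (h : ¬ transSuccessAt R t) :
    (R.conf (t+1)).X = (R.conf t).X := by
  by_cases hpc : (R.conf t).pc (R.sched t) = Loc.trans
  · rcases inv_trans (R.steps t) hpc with he | hiv
    · rw [he]
    · exfalso; apply h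
      refine ⟨hpc, ?_⟩
      rw [hiv.1]
      split <;> simp
  · exact X_frame2 (R.steps t) hpc

lemma persist_fun {α : Sort*} (g : ℕ → α) {a b : ℕ} (hab : a ≤ b)
    (h : ∀ u, a ≤ u → u < b → g (u+1) = g u) : g b = g a := by
  induction b, hab using Nat.le_induction with
  | base => rfl
  | succ m hm ih =>
      rw [h m hm (Nat.lt_succ_self m)]
      exact ih (fun u hu hu' => h u hu (Nat.lt_succ_of_lt hu'))

lemma X_const {t1 t2 : ℕ} (h12 : t1 ≤ t2)
    (h : ∀ u, t1 ≤ u → u < t2 → ¬ transSuccessAt R u) :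
    (R.conf t2).X = (R.conf t1).X :=
  persist_fun (fun u => (R.conf u).X) h12
    (fun u hu hu' => not_commit_X R (h u hu hu'))

lemma X_source : ∀ v (q : Fin n) (f : Bool), (R.conf v).X = some (q, f) →
    ∃ t' < v, transSuccessAt R t' ∧ R.sched t' = q ∧ (R.conf t').face q = f ∧
      ∀ u, t' < u → u < v → ¬ transSuccessAt R u := by
  intro v
  induction v with
  | zero =>
      intro q f hX
      rw [R.start] at hX
      simp [initConf] at hX
  | succ u ih =>
      intro q f hX
      by_cases hc : transSuccessAt R u
      · obtain ⟨-, -, h3, -⟩ := commit_effect R hc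
        rw [hX] at h3
        obtain ⟨hq, hf⟩ : R.sched u = q ∧ (R.conf u).face (R.sched u) = f := by
          have := h3.symm
          simp at this
          exact ⟨this.1, this.2⟩
        refine ⟨u, Nat.lt_succ_self u, hc, hq, by rw [hq] at hf; exact hf, ?_⟩
        intro w hw hw'
        omega
      · rw [not_commit_X R hc] at hX
        obtain ⟨t', ht', hc', hq, hf, hno⟩ := ih q f hX
        refine ⟨t', Nat.lt_succ_of_lt ht', hc', hq, hf, ?_⟩
        intro w hw hw'
        rcases Nat.lt_succ_iff_lt_or_eq.mp hw' with h | h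
        · exact hno w hw h
        · subst h; exact hc

end RunBasic
section Inv7
variable {n : ℕ}

lemma Inv7_step {a : Fin n} {c c' : Conf n} (h : MStep n a c c')
    (ih : ∀ r, (c.pc r = Loc.entry2 ∨ c.pc r = Loc.trans) →
      c.done r (c.face r) = false) :
    ∀ r, (c'.pc r = Loc.entry2 ∨ c'.pc r = Loc.trans) →
      c'.done r (c'.face r) = false := by
  intro r hr
  by_cases hra : r = a
  · subst hra
    cases h <;> simp_all [Function.update]
  · have h1 := pc_frame h hra
    have h2 := face_frame h hra
    have h3 := done_frame h hra
    rw [h1] at hr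
    rw [h2, h3]
    exact ih r hr

lemma Inv7 (R : MRun n) : ∀ t (r : Fin n),
    ((R.conf t).pc r = Loc.entry2 ∨ (R.conf t).pc r = Loc.trans) →
    (R.conf t).done r ((R.conf t).face r) = false := by
  intro t
  induction t with
  | zero =>
      intro r h
      rw [R.start] at h
      simp [initConf] at h
  | succ u ih => exact Inv7_step (R.steps u) ih

end Inv7
section Stay
variable {n : ℕ}

def InA : Loc → Prop := fun l =>
  InW l ∨ l = Loc.crit ∨ l = Loc.exit1 ∨ l = Loc.exit2

lemma pc_next_W {a : Fin n} {c c' : Conf n} (h : MStep n a c c')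
    (hW : InW (c.pc a)) (hnc : c'.pc a ≠ Loc.crit) : InW (c'.pc a) := by
  rcases hW with h1|h1|h1|h1 <;> cases h <;> simp_all [InW]

lemma pc_next_A {a : Fin n} {c c' : Conf n} (h : MStep n a c c')
    (hA : InA (c.pc a)) (hx : c.pc a ≠ Loc.exit2) : InA (c'.pc a) := by
  rcases hA with h1|h1|h1|h1
  · rcases h1 with h1|h1|h1|h1 <;> cases h <;> simp_all [InA, InW]
  · cases h <;> simp_all [InA, InW]
  · cases h <;> simp_all [InA, InW]
  · exact absurd h1 hx

variable (R : MRun n)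

lemma W_stay {r : Fin n} {t : ℕ} (h0 : InW ((R.conf t).pc r))
    (hnc : ∀ u, t ≤ u → (R.conf u).pc r ≠ Loc.crit) :
    ∀ u, t ≤ u → InW ((R.conf u).pc r) := by
  intro u hu
  induction u, hu using Nat.le_induction with
  | base => exact h0
  | succ m hm ih =>
      by_cases hrs : r = R.sched m
      · subst hrs
        exact pc_next_W (R.steps m) ih (hnc (m+1) (by omega))
      · rw [run_pc_frame R hrs]; exact ih

lemma A_stay {r : Fin n} {t : ℕ} (h0 : InA ((R.conf t).pc r))
    (hne : ∀ u, t ≤ u → ¬(R.sched u = r ∧ (R.conf u).pc r = Loc.exit2)) :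
    ∀ u, t ≤ u → InA ((R.conf u).pc r) := by
  intro u hu
  induction u, hu using Nat.le_induction with
  | base => exact h0
  | succ m hm ih =>
      by_cases hrs : r = R.sched m
      · subst hrs
        refine pc_next_A (R.steps m) ih (fun hx => ?_)
        exact hne m hm ⟨rfl, hx⟩
      · rw [run_pc_frame R hrs]; exact ih

lemma frozen {r : Fin n} {t v : ℕ} (htv : t ≤ v)
    (h : ∀ u, t ≤ u → u < v → R.sched u ≠ r) :
    (R.conf v).pc r = (R.conf t).pc r ∧
    (R.conf v).face r = (R.conf t).face r ∧
    (R.conf v).prev r = (R.conf t).prev r := by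
  refine ⟨persist_fun (fun u => (R.conf u).pc r) htv ?_,
    persist_fun (fun u => (R.conf u).face r) htv ?_,
    persist_fun (fun u => (R.conf u).prev r) htv ?_⟩ <;>
  · intro u hu hu'
    first
      | exact pc_frame (R.steps u) (fun he => h u hu hu' he.symm)
      | exact face_frame (R.steps u) (fun he => h u hu hu' he.symm)
      | exact prev_frame (R.steps u) (fun he => h u hu hu' he.symm)

lemma next_active (hfair : fairRun R) (r : Fin n) (t : ℕ) :
    ∃ σ, t ≤ σ ∧ R.sched σ = r ∧
      ∀ u, t ≤ u → u ≤ σ →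
        (R.conf u).pc r = (R.conf t).pc r ∧
        (R.conf u).face r = (R.conf t).face r ∧
        (R.conf u).prev r = (R.conf t).prev r := by
  classical
  have hex : ∃ m, t ≤ m ∧ R.sched m = r := hfair r t
  refine ⟨Nat.find hex, (Nat.find_spec hex).1, (Nat.find_spec hex).2, ?_⟩
  intro u hu hu'
  refine frozen R hu (fun v hv hv' => ?_)
  intro he
  exact Nat.find_min hex (lt_of_lt_of_le hv' hu') ⟨hv, he⟩

lemma prev_const {r : Fin n} {t v : ℕ} (htv : t ≤ v)
    (h : ∀ u, t ≤ u → u < v → (R.conf u).pc r ≠ Loc.trans) :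
    (R.conf v).prev r = (R.conf t).prev r := by
  refine persist_fun (fun u => (R.conf u).prev r) htv (fun u hu hu' => ?_)
  by_cases hrs : r = R.sched u
  · subst hrs
    exact congrFun (prev_frame2 (R.steps u) (h u hu hu')) _
  · exact prev_frame (R.steps u) hrs

lemma face_const {r : Fin n} {t v : ℕ} (htv : t ≤ v)
    (h : ∀ u, t ≤ u → u < v → (R.conf u).pc r ≠ Loc.idle) :
    (R.conf v).face r = (R.conf t).face r := by
  refine persist_fun (fun u => (R.conf u).face r) htv (fun u hu hu' => ?_)
  by_cases hrs : r = R.sched u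
  · subst hrs
    exact congrFun (face_frame2 (R.steps u) (h u hu hu')) _
  · exact face_frame (R.steps u) hrs

end Stay
section FaceInv
variable {n : ℕ}

lemma faceInv_step {a : Fin n} {c c' : Conf n} (h : MStep n a c c') {f : Bool}
    (hnc : ¬(c.pc a = Loc.trans ∧ c'.pc a ≠ Loc.trans))
    (ih : ((InA (c.pc a) ∨ c.pc a = Loc.idle) ∧ c.face a = f) ∨
      ((c.pc a = Loc.entry1 ∨ c.pc a = Loc.entry2 ∨ c.pc a = Loc.trans) ∧
        c.face a = !f)) :
    ((InA (c'.pc a) ∨ c'.pc a = Loc.idle) ∧ c'.face a = f) ∨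
      ((c'.pc a = Loc.entry1 ∨ c'.pc a = Loc.entry2 ∨ c'.pc a = Loc.trans) ∧
        c'.face a = !f) := by
  cases h <;> simp_all [InA, InW]

lemma faceInv (R : MRun n) {t' : ℕ} {q : Fin n} {f : Bool}
    (hc : transSuccessAt R t') (hq : R.sched t' = q)
    (hf : (R.conf t').face q = f) :
    ∀ u, t' < u → (∀ v, t' < v → v < u → ¬(transSuccessAt R v ∧ R.sched v = q)) →
    ((InA ((R.conf u).pc q) ∨ (R.conf u).pc q = Loc.idle) ∧ (R.conf u).face q = f) ∨
      (((R.conf u).pc q = Loc.entry1 ∨ (R.conf u).pc q = Loc.entry2 ∨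
          (R.conf u).pc q = Loc.trans) ∧ (R.conf u).face q = !f) := by
  intro u hu
  induction u, hu using Nat.le_induction with
  | base =>
      intro _
      simp only [Nat.succ_eq_add_one]
      obtain ⟨h1, -, -, -, -, -, h7, -⟩ := commit_effect R hc
      rw [hq] at h1
      left
      constructor
      · left
        rw [h1]
        split <;> simp [InA, InW]
      · rw [congrFun h7 q, hf]
  | succ m hm ih =>
      intro hno
      have ihm := ih (fun v hv hv' => hno v hv (by omega))
      by_cases hrs : q = R.sched m
      · subst hrs
        refine faceInv_step (R.steps m) ?_ ihm
        intro hx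
        exact hno m hm (by omega) ⟨⟨hx.1, hx.2⟩, rfl⟩
      · have h1 := run_pc_frame R hrs
        have h2 := face_frame (R.steps m) hrs
        rw [h1, h2]
        exact ihm

lemma bt_step {a : Fin n} {c c' : Conf n} (h : MStep n a c c') :
    (c'.pc a = Loc.setSucc → (c.pc a = Loc.lockPred ∧ c'.prev a = c.prev a)) ∧
    (c'.pc a = Loc.lockPred →
      (c.pc a = Loc.trans ∧ c'.prev a = c.X ∧ c'.pc a ≠ Loc.trans)) := by
  cases h <;> constructor <;> intro h' <;>
    first
      | (split at h' <;> simp_all)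
      | simp_all

lemma backtrace (R : MRun n) : ∀ b (r : Fin n),
    ((R.conf b).pc r = Loc.lockPred ∨ (R.conf b).pc r = Loc.setSucc) →
    ∃ τ < b, transSuccessAt R τ ∧ R.sched τ = r ∧
      (∀ v, τ < v → v ≤ b →
        ((R.conf v).pc r = Loc.lockPred ∨ (R.conf v).pc r = Loc.setSucc)) ∧
      (∀ v, τ < v → v ≤ b → (R.conf v).prev r = (R.conf τ).X) := by
  intro b
  induction b with
  | zero =>
      intro r hr
      rw [R.start] at hr
      simp [initConf] at hr
  | succ u ih =>
      intro r hr
      by_cases hrs : r = R.sched u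
      · subst hrs
        set r := R.sched u
        rcases hr with hr | hr
        · -- became lockPred: this step is the commit
          obtain ⟨hpc, hprev, hne⟩ := (bt_step (R.steps u)).2 hr
          refine ⟨u, Nat.lt_succ_self u, ⟨hpc, by rw [hr]; simp⟩, rfl, ?_, ?_⟩
          · intro v hv hv'
            have : v = u + 1 := by omega
            subst this
            exact Or.inl hr
          · intro v hv hv'
            have : v = u + 1 := by omega
            subst this
            exact hprev
        · -- became setSucc: previous was lockPred
          obtain ⟨hpc, hprev⟩ := (bt_step (R.steps u)).1 hr
          obtain ⟨τ, hτ, hcom, hsch, hwin, hpv⟩ := ih r (Or.inl hpc)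
          refine ⟨τ, by omega, hcom, hsch, ?_, ?_⟩
          · intro v hv hv'
            rcases Nat.lt_succ_iff_lt_or_eq.mp (Nat.lt_succ_of_le hv') with h | h
            · exact hwin v hv (by omega)
            · subst h; exact Or.inr hr
          · intro v hv hv'
            rcases Nat.lt_succ_iff_lt_or_eq.mp (Nat.lt_succ_of_le hv') with h | h
            · exact hpv v hv (by omega)
            · subst h
              rw [hprev]
              exact hpv u hτ (by omega)
      · have h1 := run_pc_frame R hrs
        have h2 := prev_frame (R.steps u) hrs
        rw [h1] at hr
        obtain ⟨τ, hτ, hcom, hsch, hwin, hpv⟩ := ih r hr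
        refine ⟨τ, by omega, hcom, hsch, ?_, ?_⟩
        · intro v hv hv'
          rcases Nat.lt_succ_iff_lt_or_eq.mp (Nat.lt_succ_of_le hv') with h | h
          · exact hwin v hv (by omega)
          · subst h; rw [h1]; exact hr
        · intro v hv hv'
          rcases Nat.lt_succ_iff_lt_or_eq.mp (Nat.lt_succ_of_le hv') with h | h
          · exact hpv v hv (by omega)
          · subst h; rw [h2]; exact hpv u hτ (by omega)

end FaceInv
section Persist
variable {n : ℕ}

lemma done_false_step {a : Fin n} {c c' : Conf n} (h : MStep n a c c')
    {q : Fin n} {g : Bool} (hf : c.done q g = false)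
    (hx : ¬(a = q ∧ c.pc q = Loc.exit1 ∧ c.face q = g)) :
    c'.done q g = false := by
  cases h
  case doneWrite hpc =>
    by_cases hq : q = a
    · subst hq
      by_cases hg : c.face q = g <;> simp_all [Function.update]
    · simp [Function.update_of_ne hq, hf]
  case exitDone hpc =>
    by_cases hq : q = a
    · subst hq
      have hg : c.face q ≠ g := fun hg => hx ⟨rfl, hpc, hg⟩
      simp_all [Function.update]
      exact fun he => hg he.symm
    · simp [Function.update_of_ne hq, hf]
  all_goals exact hf

lemma done_true_step {a : Fin n} {c c' : Conf n} (h : MStep n a c c')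
    {q : Fin n} {g : Bool} (hf : c.done q g = true)
    (hx : ¬(a = q ∧ c.pc q = Loc.entry1 ∧ c.face q = g)) :
    c'.done q g = true := by
  cases h
  case doneWrite hpc =>
    by_cases hq : q = a
    · subst hq
      have hg : c.face q ≠ g := fun hg => hx ⟨rfl, hpc, hg⟩
      simp_all [Function.update]
      exact fun he => hg he.symm
    · simp [Function.update_of_ne hq, hf]
  case exitDone hpc =>
    by_cases hq : q = a
    · subst hq
      by_cases hg : c.face q = g <;> simp_all [Function.update]
    · simp [Function.update_of_ne hq, hf]
  all_goals exact hf

lemma lock_false_step {a : Fin n} {c c' : Conf n} (h : MStep n a c c')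
    {s q : Fin n} (hf : c.lock s q = false)
    (hx : ¬(a = s ∧ c.pc s = Loc.lockPred)) :
    c'.lock s q = false := by
  cases h
  case lockWrite q0 f0 hpc hprev =>
    by_cases hs : s = a
    · subst hs; exact absurd ⟨rfl, hpc⟩ hx
    · simp [Function.update_of_ne hs, hf]
  case exitUnlockSome z hpc hsucc =>
    by_cases hs : s = z
    · subst hs
      by_cases hq : q = a <;> simp_all [Function.update]
    · simp [Function.update_of_ne hs, hf]
  all_goals exact hf

lemma lock_true_step {a : Fin n} {c c' : Conf n} (h : MStep n a c c')
    {s q : Fin n} (hf : c.lock s q = true)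
    (hx : ¬(a = q ∧ c.pc q = Loc.exit2)) :
    c'.lock s q = true := by
  cases h
  case lockWrite q0 f0 hpc hprev =>
    by_cases hs : s = a
    · subst hs
      by_cases hq : q = q0 <;> simp_all [Function.update]
    · simp [Function.update_of_ne hs, hf]
  case exitUnlockSome z hpc hsucc =>
    have haq : a ≠ q := fun he => hx ⟨he, by rw [← he]; exact hpc⟩
    by_cases hs : s = z
    · subst hs
      have : q ≠ a := fun he => haq he.symm
      simp [Function.update, this, hf]
    · simp [Function.update_of_ne hs, hf]
  all_goals exact hf

lemma succ_step {a : Fin n} {c c' : Conf n} (h : MStep n a c c')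
    {q s : Fin n} {f : Bool} (hv : c.succ q f = some s)
    (h1 : ¬(a = q ∧ c.pc q = Loc.entry2 ∧ c.face q = f))
    (h2 : ¬(c.pc a = Loc.setSucc ∧ c.prev a = some (q, f) ∧ a ≠ s)) :
    c'.succ q f = some s := by
  cases h
  case succInit hpc =>
    by_cases hq : q = a
    · subst hq
      have hg : c.face q ≠ f := fun hg => h1 ⟨rfl, hpc, hg⟩
      simp_all [Function.update]
      exact fun he => hg he.symm
    · simp [Function.update_of_ne hq, hv]
  case succWrite q0 f0 hpc hprev =>
    by_cases hq : q = q0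
    · subst hq
      by_cases hf0 : f0 = f
      · subst hf0
        have has : a = s := by
          by_contra hne
          exact h2 ⟨hpc, hprev, hne⟩
        subst has
        simp [Function.update]
      · simp [Function.update, Function.update_of_ne (Ne.symm hf0), hv]
        intro he
        exact absurd he.symm hf0
    · simp [Function.update_of_ne hq, hv]
  all_goals exact hv

end Persist
section Intervals
variable {n : ℕ} (R : MRun n)

lemma InW_resolve {l : Loc} (h : InW l) :
    l ≠ Loc.trans ∧ l ≠ Loc.exit1 ∧ l ≠ Loc.exit2 ∧ l ≠ Loc.crit ∧
    l ≠ Loc.entry1 ∧ l ≠ Loc.entry2 ∧ l ≠ Loc.idle := by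
  rcases h with h|h|h|h <;> subst h <;> simp

lemma done_false_interval {q : Fin n} {g : Bool} {t1 t2 : ℕ} (h12 : t1 ≤ t2)
    (h0 : (R.conf t1).done q g = false)
    (hx : ∀ u, t1 ≤ u → u < t2 →
      ¬(R.sched u = q ∧ (R.conf u).pc q = Loc.exit1 ∧ (R.conf u).face q = g)) :
    (R.conf t2).done q g = false := by
  induction t2, h12 using Nat.le_induction with
  | base => exact h0
  | succ m hm ih =>
      refine done_false_step (R.steps m)
        (ih (fun u hu hu' => hx u hu (by omega))) ?_
      exact hx m hm (by omega)

lemma done_true_interval {q : Fin n} {g : Bool} {t1 t2 : ℕ} (h12 : t1 ≤ t2)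
    (h0 : (R.conf t1).done q g = true)
    (hx : ∀ u, t1 ≤ u → u < t2 →
      ¬(R.sched u = q ∧ (R.conf u).pc q = Loc.entry1 ∧ (R.conf u).face q = g)) :
    (R.conf t2).done q g = true := by
  induction t2, h12 using Nat.le_induction with
  | base => exact h0
  | succ m hm ih =>
      refine done_true_step (R.steps m)
        (ih (fun u hu hu' => hx u hu (by omega))) ?_
      exact hx m hm (by omega)

lemma lock_false_interval {s q : Fin n} {t1 t2 : ℕ} (h12 : t1 ≤ t2)
    (h0 : (R.conf t1).lock s q = false)
    (hx : ∀ u, t1 ≤ u → u < t2 →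
      ¬(R.sched u = s ∧ (R.conf u).pc s = Loc.lockPred)) :
    (R.conf t2).lock s q = false := by
  induction t2, h12 using Nat.le_induction with
  | base => exact h0
  | succ m hm ih =>
      refine lock_false_step (R.steps m)
        (ih (fun u hu hu' => hx u hu (by omega))) ?_
      exact hx m hm (by omega)

lemma lock_true_interval {s q : Fin n} {t1 t2 : ℕ} (h12 : t1 ≤ t2)
    (h0 : (R.conf t1).lock s q = true)
    (hx : ∀ u, t1 ≤ u → u < t2 →
      ¬(R.sched u = q ∧ (R.conf u).pc q = Loc.exit2)) :
    (R.conf t2).lock s q = true := by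
  induction t2, h12 using Nat.le_induction with
  | base => exact h0
  | succ m hm ih =>
      refine lock_true_step (R.steps m)
        (ih (fun u hu hu' => hx u hu (by omega))) ?_
      exact hx m hm (by omega)

lemma succ_interval {q s : Fin n} {f : Bool} {t1 t2 : ℕ} (h12 : t1 ≤ t2)
    (h0 : (R.conf t1).succ q f = some s)
    (h1 : ∀ u, t1 ≤ u → u < t2 →
      ¬(R.sched u = q ∧ (R.conf u).pc q = Loc.entry2 ∧ (R.conf u).face q = f))
    (h2 : ∀ u, t1 ≤ u → u < t2 →
      ¬((R.conf u).pc (R.sched u) = Loc.setSucc ∧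
        (R.conf u).prev (R.sched u) = some (q, f) ∧ R.sched u ≠ s)) :
    (R.conf t2).succ q f = some s := by
  induction t2, h12 using Nat.le_induction with
  | base => exact h0
  | succ m hm ih =>
      refine succ_step (R.steps m)
        (ih (fun u hu hu' => h1 u hu (by omega))
            (fun u hu hu' => h2 u hu (by omega))) ?_ ?_
      · exact h1 m hm (by omega)
      · exact h2 m hm (by omega)

lemma X_some_stay {t : ℕ} (h : (R.conf t).X ≠ none) :
    ∀ u, t ≤ u → (R.conf u).X ≠ none := by
  intro u hu
  induction u, hu using Nat.le_induction with
  | base => exact h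
  | succ m hm ih =>
      by_cases hc : transSuccessAt R m
      · rw [(commit_effect R hc).2.2.1]; simp
      · rw [not_commit_X R hc]; exact ih

end Intervals
section Propagate
variable {n : ℕ} (R : MRun n)

lemma propagate_step {τ1 τ2 : ℕ} (h12 : τ1 < τ2)
    (hc1 : transSuccessAt R τ1) (hc2 : transSuccessAt R τ2)
    (hno : ∀ v, τ1 < v → v < τ2 → ¬ transSuccessAt R v) :
    ∀ u, τ2 < u →
      (∀ v, τ1 < v → v ≤ u → InW ((R.conf v).pc (R.sched τ1))) →
      InW ((R.conf u).pc (R.sched τ2)) ∧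
      (R.conf u).prev (R.sched τ2)
          = some (R.sched τ1, (R.conf τ1).face (R.sched τ1)) ∧
      ((R.conf u).pc (R.sched τ2) = Loc.lockPred ∨
        (R.conf u).lock (R.sched τ2) (R.sched τ1) = true) := by
  set s1 := R.sched τ1 with hs1
  set s2 := R.sched τ2 with hs2
  set g := (R.conf τ1).face s1 with hg
  have hpc2 : (R.conf τ2).pc s2 = Loc.trans := hc2.1
  have hX2 : (R.conf τ2).X = some (s1, g) := by
    have h1 : (R.conf (τ1+1)).X = some (s1, g) := (commit_effect R hc1).2.2.1
    have h2 : (R.conf τ2).X = (R.conf (τ1+1)).X :=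
      X_const R (by omega) (fun v hv hv' => hno v (by omega) hv')
    rw [h2, h1]
  have hdone : ∀ m, τ1 ≤ m →
      (∀ v, τ1 < v → v ≤ m → InW ((R.conf v).pc s1)) →
      (R.conf m).done s1 g = false := by
    intro m hm hW
    have h0 : (R.conf τ1).done s1 g = false := Inv7 R τ1 s1 (Or.inr hc1.1)
    refine done_false_interval R hm h0 ?_
    intro u hu hu' hcon
    rcases Nat.eq_or_lt_of_le hu with he | hlt
    · rw [← he] at hcon
      rw [hc1.1] at hcon
      exact absurd hcon.2.1 (by simp)
    · exact (InW_resolve (hW u hlt (by omega))).2.1 hcon.2.1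
  intro u hu hW
  induction u, hu using Nat.le_induction with
  | base =>
      obtain ⟨h1, h2, -⟩ := commit_effect R hc2
      rw [← hs2] at h1 h2
      rw [hX2] at h1 h2
      simp only [Nat.succ_eq_add_one]
      refine ⟨?_, h2, Or.inl ?_⟩ <;> · rw [h1]; simp [InW]
  | succ m hm ihm =>
      have hWm : ∀ v, τ1 < v → v ≤ m → InW ((R.conf v).pc s1) :=
        fun v hv hv' => hW v hv (by omega)
      obtain ⟨ih1, ih2, ih3⟩ := ihm hWm
      have hs12 : s1 ≠ s2 := by
        intro he
        have h1 : InW ((R.conf τ2).pc s1) := hW τ2 h12 (by omega)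
        rw [he] at h1
        exact (InW_resolve h1).1 hpc2
      by_cases hact : s2 = R.sched m
      · have hstep : MStep n s2 (R.conf m) (R.conf (m+1)) := by
          rw [hact]; exact R.steps m
        rcases ih1 with hl | hl | hl | hl
        · -- lockPred
          obtain ⟨hp1, hp2⟩ := inv_lockPred hstep hl ih2
          refine ⟨by rw [hp1]; simp [InW], ?_, Or.inr ?_⟩
          · rw [congrFun (prev_frame2 hstep (by rw [hl]; simp)) s2]
            exact ih2
          · rw [hp2]; simp [Function.update]
        · -- setSucc
          obtain ⟨hp1, hp2⟩ := inv_setSucc hstep hl ih2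
          have hlock : (R.conf m).lock s2 s1 = true := by
            rcases ih3 with h | h
            · rw [hl] at h; simp at h
            · exact h
          refine ⟨by rw [hp1]; simp [InW], ?_, Or.inr ?_⟩
          · rw [congrFun (prev_frame2 hstep (by rw [hl]; simp)) s2]
            exact ih2
          · rw [congrFun (congrFun (lock_frame2 hstep (by rw [hl]; simp)
              (by rw [hl]; simp)) s2) s1]
            exact hlock
        · -- checkDone
          have hdm : (R.conf m).done s1 g = false := hdone m (by omega) hWm
          have hlock : (R.conf m).lock s2 s1 = true := by
            rcases ih3 with h | h
            · rw [hl] at h; simp at h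
            · exact h
          rcases inv_checkDone hstep hl ih2 with ⟨hd, -⟩ | ⟨-, hp1⟩
          · rw [hdm] at hd; exact absurd hd (by simp)
          · refine ⟨by rw [hp1]; simp [InW], ?_, Or.inr ?_⟩
            · rw [congrFun (prev_frame2 hstep (by rw [hl]; simp)) s2]
              exact ih2
            · rw [congrFun (congrFun (lock_frame2 hstep (by rw [hl]; simp)
                (by rw [hl]; simp)) s2) s1]
              exact hlock
        · -- spin
          have hlock : (R.conf m).lock s2 s1 = true := by
            rcases ih3 with h | h
            · rw [hl] at h; simp at h
            · exact h
          rcases inv_spin hstep hl ih2 with ⟨-, hceq⟩ | ⟨hfalse, -⟩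
          · rw [hceq]
            exact ⟨by rw [hl]; simp [InW], ih2, Or.inr hlock⟩
          · rw [hlock] at hfalse; exact absurd hfalse (by simp)
      · have hf1 := pc_frame (R.steps m) hact
        have hf2 := prev_frame (R.steps m) hact
        refine ⟨by rw [hf1]; exact ih1, by rw [hf2]; exact ih2, ?_⟩
        rcases ih3 with h | h
        · exact Or.inl (by rw [hf1]; exact h)
        · refine Or.inr (lock_true_step (R.steps m) h ?_)
          rintro ⟨he, hpc⟩
          have h1 : InW ((R.conf m).pc s1) := hWm m (by omega) (le_refl m)
          exact (InW_resolve h1).2.2.1 hpc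

end Propagate
section UP
variable {n : ℕ} (R : MRun n)

lemma propagate {τ0 b : ℕ} (hc0 : transSuccessAt R τ0)
    (hW0 : ∀ v, τ0 < v → v ≤ b → InW ((R.conf v).pc (R.sched τ0))) :
    ∀ τ, τ0 < τ → τ ≤ b → transSuccessAt R τ →
      ∀ v, τ < v → v ≤ b → InW ((R.conf v).pc (R.sched τ)) := by
  intro τ
  induction τ using Nat.strong_induction_on with
  | _ τ ih =>
    intro hτ0 hτb hcτ v hv hvb
    have hXne : (R.conf τ).X ≠ none := by
      refine X_some_stay R (t := τ0 + 1) ?_ τ (by omega)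
      rw [(commit_effect R hc0).2.2.1]; simp
    obtain ⟨q, f, hqf⟩ : ∃ q f, (R.conf τ).X = some (q, f) := by
      cases hX : (R.conf τ).X with
      | none => exact absurd hX hXne
      | some y => obtain ⟨y1, y2⟩ := y; exact ⟨y1, y2, rfl⟩
    obtain ⟨t', ht', hct', hq', hf', hno'⟩ := X_source R τ q f hqf
    have ht0 : τ0 ≤ t' := by
      by_contra h
      exact hno' τ0 (by omega) hτ0 hc0
    rcases Nat.eq_or_lt_of_le ht0 with he | hlt
    · subst he
      exact (propagate_step R ht' hc0 hcτ hno' v hv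
        (fun w hw hwv => hW0 w hw (by omega))).1
    · have hWt' : ∀ w, t' < w → w ≤ b → InW ((R.conf w).pc (R.sched t')) :=
        ih t' ht' hlt (by omega) hct'
      exact (propagate_step R ht' hct' hcτ hno' v hv
        (fun w hw hwv => hWt' w hw (by omega))).1

lemma propagate_stuck {τ0 τ : ℕ} (hc0 : transSuccessAt R τ0)
    (hst : ∀ u, τ0 < u → InW ((R.conf u).pc (R.sched τ0)))
    (hττ0 : τ0 < τ) (hcτ : transSuccessAt R τ) :
    ∀ u, τ < u → InW ((R.conf u).pc (R.sched τ)) := by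
  intro v hv
  exact propagate R (b := v) hc0 (fun w hw _ => hst w hw) τ hττ0 (by omega)
    hcτ v hv (le_refl v)

lemma march (hfair : fairRun R) {t : ℕ} (hct : transSuccessAt R t)
    (hstuck : ∀ u, t < u → InW ((R.conf u).pc (R.sched t)))
    {q : Fin n} {f : Bool} (hX : (R.conf t).X = some (q, f)) :
    ∃ a2 a3, t < a2 ∧ a2 < a3 ∧ R.sched a3 = R.sched t ∧
      R.sched a2 = R.sched t ∧
      (∀ u, t < u → (R.conf u).prev (R.sched t) = some (q, f)) ∧
      (R.conf (a2+1)).succ q f = some (R.sched t) ∧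
      (R.conf a2).pc (R.sched t) = Loc.setSucc ∧
      (R.conf a3).done q f = false ∧
      (∀ u, a2 < u → (R.conf u).pc (R.sched t) = Loc.checkDone ∨
        (R.conf u).pc (R.sched t) = Loc.spin) ∧
      (∀ u, a3 < u → (R.conf u).pc (R.sched t) = Loc.spin) := by
  set s := R.sched t with hs
  have hprevall : ∀ u, t < u → (R.conf u).prev s = some (q, f) := by
    intro u hu
    have h1 : (R.conf (t+1)).prev s = some (q, f) := by
      rw [(commit_effect R hct).2.1, hX]
    have h2 : (R.conf u).prev s = (R.conf (t+1)).prev s := by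
      refine prev_const R (by omega) (fun w hw hw' => ?_)
      exact (InW_resolve (hstuck w (by omega))).1
    rw [h2, h1]
  have hpc1 : (R.conf (t+1)).pc s = Loc.lockPred := by
    have := (commit_effect R hct).1
    rw [← hs, hX] at this
    simpa using this
  -- first scheduling: lockWrite
  obtain ⟨σ1, hσ1le, hσ1s, hσ1c⟩ := next_active R hfair s (t+1)
  have hpcσ1 : (R.conf σ1).pc s = Loc.lockPred := by
    rw [(hσ1c σ1 hσ1le (le_refl σ1)).1, hpc1]
  have hstep1 : MStep n s (R.conf σ1) (R.conf (σ1+1)) := by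
    rw [← hσ1s]; exact R.steps σ1
  obtain ⟨hp1, -⟩ := inv_lockPred hstep1 hpcσ1 (hprevall σ1 (by omega))
  -- second scheduling: succWrite
  obtain ⟨σ2, hσ2le, hσ2s, hσ2c⟩ := next_active R hfair s (σ1+1)
  have hpcσ2 : (R.conf σ2).pc s = Loc.setSucc := by
    rw [(hσ2c σ2 hσ2le (le_refl σ2)).1, hp1]
  have hstep2 : MStep n s (R.conf σ2) (R.conf (σ2+1)) := by
    rw [← hσ2s]; exact R.steps σ2
  obtain ⟨hp2, hsucc2⟩ := inv_setSucc hstep2 hpcσ2 (hprevall σ2 (by omega))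
  -- third scheduling: doneCheck
  obtain ⟨σ3, hσ3le, hσ3s, hσ3c⟩ := next_active R hfair s (σ2+1)
  have hpcσ3 : (R.conf σ3).pc s = Loc.checkDone := by
    rw [(hσ3c σ3 hσ3le (le_refl σ3)).1, hp2]
  have hstep3 : MStep n s (R.conf σ3) (R.conf (σ3+1)) := by
    rw [← hσ3s]; exact R.steps σ3
  have hσ3t : t < σ3 := by omega
  rcases inv_checkDone hstep3 hpcσ3 (hprevall σ3 hσ3t) with ⟨-, hcrit⟩ | ⟨hdf, hsp⟩
  · exact absurd hcrit (InW_resolve (hstuck (σ3+1) (by omega))).2.2.2.1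
  -- spin forever
  have hspin : ∀ u, σ3 < u → (R.conf u).pc s = Loc.spin := by
    intro u hu
    induction u, hu using Nat.le_induction with
    | base => simpa using hsp
    | succ m hm ih =>
        by_cases hrs : s = R.sched m
        · have hstepm : MStep n s (R.conf m) (R.conf (m+1)) := by
            simp only [hrs]; exact R.steps m
          rcases inv_spin hstepm ih (hprevall m (by omega)) with ⟨-, hceq⟩ | ⟨-, hcrit⟩
          · rw [hceq]; exact ih
          · exact absurd hcrit (InW_resolve (hstuck (m+1) (by omega))).2.2.2.1
        · rw [pc_frame (R.steps m) hrs]; exact ih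
  refine ⟨σ2, σ3, by omega, by omega, hσ3s, hσ2s, hprevall, ?_, hpcσ2, hdf, ?_, hspin⟩
  · rw [hsucc2]; simp [Function.update]
  · intro u hu
    by_cases hu3 : σ3 < u
    · exact Or.inr (hspin u hu3)
    · left
      have hu3' : u ≤ σ3 := by omega
      have : (R.conf u).pc s = (R.conf (σ2+1)).pc s := (hσ3c u (by omega) hu3').1
      rw [this, hp2]
end UP
section Helpers
variable {n : ℕ} (R : MRun n)

lemma find_least {P : ℕ → Prop} (h : ∃ u, P u) :
    ∃ u, P u ∧ ∀ v, v < u → ¬ P v := by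
  classical
  exact ⟨Nat.find h, Nat.find_spec h, fun v hv => Nat.find_min h hv⟩

lemma true_to_false (g : ℕ → Bool) {a b : ℕ} (hab : a ≤ b)
    (ha : g a = true) (hb : g b = false) :
    ∃ v, a ≤ v ∧ v < b ∧ g v = true ∧ g (v+1) = false := by
  classical
  have hex : ∃ u, a ≤ u ∧ g u = false := ⟨b, hab, hb⟩
  obtain ⟨u1, ⟨hu1a, hu1g⟩, hmin⟩ := find_least hex
  have hne : u1 ≠ a := fun he => by rw [he, ha] at hu1g; simp at hu1g
  have hpos : a < u1 := lt_of_le_of_ne hu1a (Ne.symm hne)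
  refine ⟨u1 - 1, by omega, ?_, ?_, ?_⟩
  · have : u1 ≤ b := by
      by_contra hc
      exact hmin b (by omega) ⟨hab, hb⟩
    omega
  · have h1 : ¬(a ≤ u1 - 1 ∧ g (u1 - 1) = false) := hmin (u1-1) (by omega)
    have h2 : a ≤ u1 - 1 := by omega
    rcases Bool.eq_false_or_eq_true (g (u1-1)) with h | h
    · exact h
    · exact absurd ⟨h2, h⟩ h1
  · have : u1 - 1 + 1 = u1 := by omega
    rw [this]; exact hu1g

lemma done_flip_actor {u : ℕ} {q : Fin n} {f : Bool}
    (h1 : (R.conf u).done q f = true) (h2 : (R.conf (u+1)).done q f = false) :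
    R.sched u = q ∧ (R.conf u).pc q = Loc.entry1 ∧ (R.conf u).face q = f := by
  by_contra hx
  have := done_true_step (R.steps u) h1 hx
  rw [this] at h2; simp at h2

lemma succ_flip_actor {u : ℕ} {q s : Fin n} {f : Bool}
    (h1 : (R.conf u).succ q f = some s)
    (h2 : (R.conf (u+1)).succ q f ≠ some s) :
    (R.sched u = q ∧ (R.conf u).pc q = Loc.entry2 ∧ (R.conf u).face q = f) ∨
    ((R.conf u).pc (R.sched u) = Loc.setSucc ∧
      (R.conf u).prev (R.sched u) = some (q, f) ∧ R.sched u ≠ s) := by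
  by_contra hx
  push_neg at hx
  refine h2 (succ_step (R.steps u) h1 ?_ ?_)
  · rintro ⟨ha, hb, hc⟩
    exact hx.1 ha hb hc
  · rintro ⟨ha, hb, hc⟩
    exact hc (hx.2 ha hb)

lemma W_stay_b {q : Fin n} {a b : ℕ} (h0 : InW ((R.conf a).pc q))
    (hnc : ∀ u, a ≤ u → u ≤ b → (R.conf u).pc q ≠ Loc.crit) :
    ∀ u, a ≤ u → u ≤ b → InW ((R.conf u).pc q) := by
  intro u hu
  induction u, hu using Nat.le_induction with
  | base => intro _; exact h0
  | succ m hm ih =>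
      intro hmb
      by_cases hrs : q = R.sched m
      · subst hrs
        exact pc_next_W (R.steps m) (ih (by omega)) (hnc (m+1) (by omega) hmb)
      · rw [run_pc_frame R hrs]; exact ih (by omega)

lemma exit_path (hfair : fairRun R) {q : Fin n} {u0 : ℕ}
    (hcrit : (R.conf u0).pc q = Loc.crit)
    (hnc : ∃ u, u0 ≤ u ∧ (R.conf u).pc q ≠ Loc.crit) :
    ∃ x0 e1 e2, u0 ≤ x0 ∧ x0 < e1 ∧ e1 < e2 ∧
      (∀ u, u0 ≤ u → u ≤ x0 → (R.conf u).pc q = Loc.crit) ∧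
      R.sched e1 = q ∧ (R.conf e1).pc q = Loc.exit1 ∧
      (∀ u, x0 < u → u ≤ e1 → (R.conf u).pc q = Loc.exit1) ∧
      (R.conf (e1+1)).done q ((R.conf e1).face q) = true ∧
      (∀ u, e1 < u → u ≤ e2 → (R.conf u).pc q = Loc.exit2) ∧
      R.sched e2 = q ∧
      (∀ u, x0 < u → u ≤ e2 → (R.conf u).face q = (R.conf e1).face q) := by
  classical
  obtain ⟨u1, ⟨hu1a, hu1g⟩, hmin⟩ := find_least hnc
  have hne : u1 ≠ u0 := fun he => by rw [he] at hu1g; exact hu1g hcrit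
  have hpos : u0 < u1 := lt_of_le_of_ne hu1a (Ne.symm hne)
  set x0 := u1 - 1 with hx0
  have hcx : ∀ u, u0 ≤ u → u ≤ x0 → (R.conf u).pc q = Loc.crit := by
    intro u hu hu'
    by_contra hc
    exact hmin u (by omega) ⟨hu, hc⟩
  have hcx0 : (R.conf x0).pc q = Loc.crit := hcx x0 (by omega) (le_refl x0)
  have hx01 : x0 + 1 = u1 := by omega
  have hchg : (R.conf (x0+1)).pc q ≠ Loc.crit := by rw [hx01]; exact hu1g
  have hsch : R.sched x0 = q := by
    refine pc_changed R (fun he => hchg ?_)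
    rw [he]; exact hcx0
  have hstepx : MStep n q (R.conf x0) (R.conf (x0+1)) := by
    have h := R.steps x0
    rwa [hsch] at h
  have hex1 : (R.conf (x0+1)).pc q = Loc.exit1 := by
    rcases inv_crit hstepx hcx0 with he | he
    · exact absurd (by rw [he]; exact hcx0) hchg
    · exact he
  obtain ⟨e1, he1le, he1s, he1c⟩ := next_active R hfair q (x0+1)
  have hpce1 : ∀ u, x0 < u → u ≤ e1 → (R.conf u).pc q = Loc.exit1 := by
    intro u hu hu'
    rw [(he1c u (by omega) hu').1]; exact hex1
  have hstep1 : MStep n q (R.conf e1) (R.conf (e1+1)) := by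
    have h := R.steps e1
    rwa [he1s] at h
  obtain ⟨hp1, hd1⟩ := inv_exit1 hstep1 (hpce1 e1 (by omega) (le_refl e1))
  obtain ⟨e2, he2le, he2s, he2c⟩ := next_active R hfair q (e1+1)
  have hpce2 : ∀ u, e1 < u → u ≤ e2 → (R.conf u).pc q = Loc.exit2 := by
    intro u hu hu'
    rw [(he2c u (by omega) hu').1]; exact hp1
  have hface1 : (R.conf (e1+1)).face q = (R.conf e1).face q := by
    exact congrFun (face_frame2 hstep1
      (by rw [hpce1 e1 (by omega) (le_refl e1)]; simp)) q
  refine ⟨x0, e1, e2, by omega, by omega, by omega, hcx, he1s,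
    hpce1 e1 (by omega) (le_refl e1), hpce1, ?_, hpce2, he2s, ?_⟩
  · rw [hd1]; simp [Function.update]
  · intro u hu hu'
    by_cases hue : u ≤ e1
    · rw [(he1c u (by omega) hue).2.1]
      exact (he1c e1 he1le (le_refl e1)).2.1.symm
    · rw [(he2c u (by omega) hu').2.1, hface1]

end Helpers
section Descent
variable {n : ℕ} (R : MRun n)

lemma InA_resolve {l : Loc} (h : InA l) :
    l ≠ Loc.entry1 ∧ l ≠ Loc.entry2 ∧ l ≠ Loc.trans ∧ l ≠ Loc.idle := by
  rcases h with hw | h | h | h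
  · have h' := InW_resolve hw
    exact ⟨h'.2.2.2.2.1, h'.2.2.2.2.2.1, h'.1, h'.2.2.2.2.2.2⟩
  · subst h; simp
  · subst h; simp
  · subst h; simp

lemma descent (hfair : fairRun R) {i : ℕ}
    (hNC : ∀ j, i ≤ j → ∀ r : Fin n, (R.conf j).pc r ≠ Loc.crit) :
    ∀ t, transSuccessAt R t →
      (∀ u, t < u → InW ((R.conf u).pc (R.sched t))) → False := by
  intro t
  induction t using Nat.strong_induction_on with
  | _ t ihd =>
  intro hct hstuck
  set s := R.sched t with hs
  have hXt : (R.conf t).X ≠ none := by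
    intro hXn
    have h1 := (commit_effect R hct).1
    rw [hXn] at h1
    simp at h1
    exact (InW_resolve (hstuck (t+1) (by omega))).2.2.2.1 h1
  obtain ⟨q, f, hqf⟩ : ∃ q f, (R.conf t).X = some (q, f) := by
    cases hX : (R.conf t).X with
    | none => exact absurd hX hXt
    | some y => obtain ⟨y1, y2⟩ := y; exact ⟨y1, y2, rfl⟩
  obtain ⟨t', ht'lt, hct', hq', hf', hno⟩ := X_source R t q f hqf
  obtain ⟨a2, a3, ha2t, ha23, ha3s, ha2s, hprevs, hsucca2, hpca2, hdfa3, hcs, hspin⟩ :=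
    march R hfair hct hstuck hqf
  -- MAIN CLAIM: q is crit-free after t'
  have hqnc : ∀ u, t' < u → (R.conf u).pc q ≠ Loc.crit := by
    intro u hu hqcrit
    obtain ⟨u0, ⟨hu0t, hu0c⟩, hu0min⟩ :=
      find_least (P := fun v => t' < v ∧ (R.conf v).pc q = Loc.crit)
        ⟨u, hu, hqcrit⟩
    -- W phase before u0
    have hWph : ∀ v, t' < v → v < u0 → InW ((R.conf v).pc q) := by
      intro v hv hv'
      have hpt1 := (commit_effect R hct').1
      rw [hq'] at hpt1
      by_cases hXn : (R.conf t').X = none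
      · rw [hXn] at hpt1; simp at hpt1
        exact absurd ⟨by omega, hpt1⟩ (hu0min (t'+1) (by omega))
      · rw [if_neg hXn] at hpt1
        refine W_stay_b R (a := t'+1) (b := u0 - 1) (by rw [hpt1]; simp [InW])
          ?_ v (by omega) (by omega)
        intro w hw1 hw2 hwc
        exact hu0min w (by omega) ⟨by omega, hwc⟩
    -- q does not sit in crit forever
    by_cases hstay : ∀ v, u0 ≤ v → (R.conf v).pc q = Loc.crit
    · exact hNC (max i u0) (le_max_left _ _) q (hstay _ (le_max_right _ _))
    push_neg at hstay
    obtain ⟨x0, e1, e2, hx0u0, hx0e1, he1e2, hcx, he1s, hpce1, hpcx1,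
      hdone1, hpcx2, he2s, hfacex⟩ := exit_path R hfair hu0c hstay
    -- whole trajectory of q on (t', e2]
    have htraj : ∀ v, t' < v → v ≤ e2 →
        InW ((R.conf v).pc q) ∨ (R.conf v).pc q = Loc.crit ∨
        (R.conf v).pc q = Loc.exit1 ∨ (R.conf v).pc q = Loc.exit2 := by
      intro v hv hv'
      by_cases h1 : v < u0
      · exact Or.inl (hWph v hv h1)
      by_cases h2 : v ≤ x0
      · exact Or.inr (Or.inl (hcx v (by omega) h2))
      by_cases h3 : v ≤ e1
      · exact Or.inr (Or.inr (Or.inl (hpcx1 v (by omega) h3)))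
      · exact Or.inr (Or.inr (Or.inr (hpcx2 v (by omega) hv')))
    have htrajne : ∀ v, t' < v → v ≤ e2 →
        (R.conf v).pc q ≠ Loc.idle ∧ (R.conf v).pc q ≠ Loc.entry1 ∧
        (R.conf v).pc q ≠ Loc.entry2 ∧ (R.conf v).pc q ≠ Loc.trans := by
      intro v hv hv'
      rcases htraj v hv hv' with h | h | h | h
      · have h' := InW_resolve h
        exact ⟨h'.2.2.2.2.2.2, h'.2.2.2.2.1, h'.2.2.2.2.2.1, h'.1⟩
      all_goals rw [h]; simp
    -- face of q stays f
    have hface : ∀ v, t' < v → v ≤ e2 → (R.conf v).face q = f := by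
      intro v hv hv'
      have h2 : (R.conf (t'+1)).face q = f := by
        rw [congrFun (commit_effect R hct').2.2.2.2.2.2.1 q]
        exact hf'
      rcases Nat.eq_or_lt_of_le (show t' + 1 ≤ v by omega) with he | hlt
      · rw [← he]; exact h2
      · have h1 : (R.conf v).face q = (R.conf (t'+1)).face q := by
          refine face_const R (by omega) (fun w hw hw' => ?_)
          exact (htrajne w (by omega) (by omega)).1
        rw [h1, h2]
    have hdone1' : (R.conf (e1+1)).done q f = true := by
      have hfe1 : (R.conf e1).face q = f := hface e1 (by omega) (by omega)
      rw [hfe1] at hdone1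
      exact hdone1
    by_cases hcase : e1 < a3
    · -- CASE (α)
      obtain ⟨v1, hv1a, hv1b, hv1t, hv1f⟩ :=
        true_to_false (fun u => (R.conf u).done q f) (a := e1+1) (b := a3)
          (by omega) hdone1' hdfa3
      obtain ⟨hsv1, hpcv1, hfv1⟩ := done_flip_actor R hv1t hv1f
      by_cases hqc : ∃ m, t' < m ∧ m < v1 ∧ transSuccessAt R m ∧ R.sched m = q
      · obtain ⟨m, hm1, hm2, hmc, hmq⟩ := hqc
        have hmget : t ≤ m := by
          by_contra hlt
          exact hno m hm1 (by omega) hmc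
        rcases Nat.eq_or_lt_of_le hmget with he | hlt
        · have hqs' : q = s := by rw [← hmq, ← he]
          have h1 := hstuck v1 (by omega)
          rw [← hqs'] at h1
          exact (InW_resolve h1).2.2.2.2.1 hpcv1
        · have hstq := propagate_stuck R hct hstuck hlt hmc
          have h1 := hstq v1 (by omega)
          rw [hmq] at h1
          exact (InW_resolve h1).2.2.2.2.1 hpcv1
      · push_neg at hqc
        have hfi := faceInv R hct' hq' hf' v1 (by omega) (fun m hm1 hm2 => by
          rintro ⟨hc1, hc2⟩
          exact hqc m hm1 hm2 hc1 hc2)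
        rcases hfi with ⟨hA, -⟩ | ⟨-, hfq⟩
        · rcases hA with hA | hA
          · exact (InA_resolve hA).1 hpcv1
          · rw [hpcv1] at hA; simp at hA
        · rw [hfv1] at hfq; simp at hfq
    · -- CASE (β)
      have ha3e1 : a3 < e1 := by
        rcases Nat.lt_or_ge a3 e1 with h | h
        · exact h
        · have he : e1 = a3 := by omega
          have hq_eq : q = s := by rw [← he1s, he, ha3s]
          have h1 := hpcx1 e1 (by omega) (le_refl e1)
          rw [hq_eq, he] at h1
          exact absurd h1 ((InW_resolve (hstuck a3 (by omega))).2.1)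
      have hqs : q ≠ s := by
        intro he
        have h1 := hpcx1 e1 (by omega) (le_refl e1)
        rw [he] at h1
        exact (InW_resolve (hstuck e1 (by omega))).2.1 h1
      -- succ q f stays (some s) up to e2
      have hsuccse : (R.conf e2).succ q f = some s := by
        refine succ_interval R (t1 := a2+1) (by omega) hsucca2 ?_ ?_
        · rintro w hw hw' ⟨hws, hwpc, hwf⟩
          exact (htrajne w (by omega) (by omega)).2.2.1 hwpc
        · rintro w hw hw' ⟨hwpc, hwprev, hwne⟩
          by_cases hrq : R.sched w = q
          · rw [hrq] at hwpc hwprev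
            have hpconst : (R.conf w).prev q = (R.conf (t'+1)).prev q := by
              refine prev_const R (by omega) (fun v hv hv' => ?_)
              exact (htrajne v (by omega) (by omega)).2.2.2
            have hXt' : (R.conf t').X = some (q, f) := by
              have h1 := (commit_effect R hct').2.1
              rw [hq'] at h1
              rw [hpconst, h1] at hwprev
              exact hwprev
            obtain ⟨tw, htw, hctw, hqw, hfw, hnow⟩ := X_source R t' q f hXt'
            have hfin := faceInv R hctw hqw hfw t' (by omega) (fun v hv1 hv2 => by
              rintro ⟨hc1, hc2⟩
              exact hnow v hv1 hv2 hc1)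
            have hpt' : (R.conf t').pc q = Loc.trans := by
              rw [← hq']; exact hct'.1
            rcases hfin with ⟨hA, -⟩ | ⟨-, hfq⟩
            · rcases hA with hA | hA
              · exact (InA_resolve hA).2.2.1 hpt'
              · rw [hpt'] at hA; simp at hA
            · rw [hf'] at hfq; simp at hfq
          · -- stale writer r = sched w, r ≠ q, r ≠ s
            obtain ⟨τr, hτr, hcτr, hsτr, hwin, hpwin⟩ :=
              backtrace R w (R.sched w) (Or.inr hwpc)
            have hXτr : (R.conf τr).X = some (q, f) := by
              rw [← hpwin w (by omega) (le_refl w)]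
              exact hwprev
            obtain ⟨tw, htw, hctw, hqw, hfw, hnow⟩ := X_source R τr q f hXτr
            by_cases hτrt : τr = t
            · exact hwne (by rw [← hsτr, hτrt, ← hs])
            by_cases hτrt' : τr = t'
            · exact hrq (by rw [← hsτr, hτrt']; exact hq')
            by_cases hτrlt : τr < t'
            · -- old incarnation
              have hexn : ∃ m, tw < m ∧ m ≤ t' ∧ transSuccessAt R m ∧
                  R.sched m = q := ⟨t', by omega, le_refl t', hct', hq'⟩
              obtain ⟨tn, ⟨htn1, htn2, hctn, hqtn⟩, htnmin⟩ := find_least hexn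
              have hfin := faceInv R hctw hqw hfw tn (by omega)
                (fun v hv1 hv2 => by
                  rintro ⟨hc1, hc2⟩
                  exact htnmin v hv2 ⟨hv1, by omega, hc1, hc2⟩)
              have hptn : (R.conf tn).pc q = Loc.trans := by
                rw [← hqtn]; exact hctn.1
              rcases hfin with ⟨hA, -⟩ | ⟨-, hfq⟩
              · rcases hA with hA | hA
                · exact (InA_resolve hA).2.2.1 hptn
                · rw [hptn] at hA; simp at hA
              · by_cases htnt' : tn = t'
                · rw [htnt', hf'] at hfq; simp at hfq
                · have htnτr : τr < tn := by
                    rcases lt_trichotomy tn τr with h | h | h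
                    · exact absurd hctn (hnow tn htn1 h)
                    · exfalso
                      apply hrq
                      rw [← hsτr, ← h]
                      exact hqtn
                    · exact h
                  have hWr : ∀ v, τr < v → v ≤ w →
                      InW ((R.conf v).pc (R.sched τr)) := by
                    intro v hv1 hv2
                    rw [hsτr]
                    rcases hwin v hv1 hv2 with h | h
                    · exact Or.inl h
                    · exact Or.inr (Or.inl h)
                  have hrq2 := propagate R (τ0 := τr) (b := w) hcτr hWr tn
                    htnτr (by omega) hctn t' (by omega) (by omega)
                  rw [hqtn] at hrq2
                  have hpt' : (R.conf t').pc q = Loc.trans := by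
                    rw [← hq']; exact hct'.1
                  exact (InW_resolve hrq2).1 hpt'
            · -- τr > t
              have hτrgt : t < τr := by
                rcases Nat.lt_trichotomy τr t with h | h | h
                · exact (hno τr (by omega) h hcτr).elim
                · exact absurd h hτrt
                · exact h
              have htwt : t ≤ tw := by
                by_contra hc
                exact hnow t (by omega) hτrgt hct
              rcases Nat.eq_or_lt_of_le htwt with he | hlt2
              · exact hqs (by rw [← hqw, ← he])
              · have hstq := propagate_stuck R hct hstuck hlt2 hctw
                have h1 := hstq e2 (by omega)
                rw [hqw] at h1
                exact (InW_resolve h1).2.2.1 (hpcx2 e2 (by omega) (le_refl e2))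
      -- q's exit step at e2 unlocks s
      have hstepe2 : MStep n q (R.conf e2) (R.conf (e2+1)) := by
        have h := R.steps e2; rwa [he2s] at h
      have hpcqe2 : (R.conf e2).pc q = Loc.exit2 :=
        hpcx2 e2 (by omega) (le_refl e2)
      obtain ⟨-, hunlock⟩ := inv_exit2 hstepe2 hpcqe2
      have hfqe2 : (R.conf e2).face q = f := hface e2 (by omega) (le_refl e2)
      have hlockfalse : (R.conf (e2+1)).lock s q = false := by
        rcases hunlock with ⟨z, hz, hlk⟩ | ⟨hz, -⟩
        · rw [hfqe2, hsuccse] at hz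
          have hzs : z = s := by
            injection hz with h'
            exact h'.symm
          rw [hlk, hzs]
          simp [Function.update]
        · rw [hfqe2, hsuccse] at hz
          simp at hz
      obtain ⟨σ, hσle, hσs, hσc⟩ := next_active R hfair s (e2+1)
      have hlockσ : (R.conf σ).lock s q = false := by
        refine lock_false_interval R (t1 := e2+1) hσle hlockfalse ?_
        rintro w hw1 hw2 ⟨hws, hwpc⟩
        have h1 := hspin w (by omega)
        rw [h1] at hwpc
        simp at hwpc
      have hpcsσ : (R.conf σ).pc s = Loc.spin := hspin σ (by omega)
      have hstepσ : MStep n s (R.conf σ) (R.conf (σ+1)) := by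
        have h := R.steps σ; rwa [hσs] at h
      rcases inv_spin hstepσ hpcsσ (hprevs σ (by omega)) with ⟨hlt, -⟩ | ⟨-, hcr⟩
      · rw [hlockσ] at hlt; simp at hlt
      · exact (InW_resolve (hstuck (σ+1) (by omega))).2.2.2.1 hcr
  -- q is stuck after t'
  have hstuckq : ∀ u, t' < u → InW ((R.conf u).pc q) := by
    intro u hu
    have hpt1 := (commit_effect R hct').1
    rw [hq'] at hpt1
    by_cases hXn : (R.conf t').X = none
    · rw [hXn] at hpt1; simp at hpt1
      exact absurd hpt1 (hqnc (t'+1) (by omega))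
    · rw [if_neg hXn] at hpt1
      refine W_stay R (t := t'+1) (by rw [hpt1]; simp [InW]) ?_ u (by omega)
      intro v hv
      exact hqnc v (by omega)
  exact ihd t' ht'lt hct' (fun u hu => by rw [hq']; exact hstuckq u hu)

end Descent
theorem LM_deadlock_freedom (n : ℕ) (R : MRun n)
    (hfair : fairRun R) (hsp : stronglyProgressiveRun R)
    (i : ℕ) (p : Fin n) (hinv : enterInvokedAt R i p) :
    ∃ j, i ≤ j ∧ ∃ q : Fin n, inCS (R.conf j) q := by
  by_contra hcon
  push_neg at hcon
  have hNC : ∀ j, i ≤ j → ∀ r : Fin n, (R.conf j).pc r ≠ Loc.crit := by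
    intro j hj r
    exact hcon j hj r
  obtain ⟨hschedi, hpci, hpci1⟩ := hinv
  obtain ⟨σa, hσale, hσas, hσac⟩ := next_active R hfair p (i+1)
  have hpca : (R.conf σa).pc p = Loc.entry1 := by
    rw [(hσac σa hσale (le_refl _)).1]; exact hpci1
  have hstepa : MStep n p (R.conf σa) (R.conf (σa+1)) := by
    have h := R.steps σa; rwa [hσas] at h
  obtain ⟨hpb, -⟩ := inv_entry1 hstepa hpca
  obtain ⟨σb, hσble, hσbs, hσbc⟩ := next_active R hfair p (σa+1)
  have hpcb : (R.conf σb).pc p = Loc.entry2 := by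
    rw [(hσbc σb hσble (le_refl _)).1]; exact hpb
  have hstepb : MStep n p (R.conf σb) (R.conf (σb+1)) := by
    have h := R.steps σb; rwa [hσbs] at h
  obtain ⟨hpt, -⟩ := inv_entry2 hstepb hpcb
  obtain ⟨j, hjle, hcj⟩ := hsp (σb+1) ⟨p, hpt⟩
  have hpc1 : (R.conf (j+1)).pc (R.sched j) = Loc.lockPred := by
    have h1 := (commit_effect R hcj).1
    by_cases hXn : (R.conf j).X = none
    · rw [hXn] at h1; simp at h1
      exact absurd h1 (hNC (j+1) (by omega) _)
    · rw [if_neg hXn] at h1; exact h1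
  have hstuck : ∀ u, j < u → InW ((R.conf u).pc (R.sched j)) := by
    intro u hu
    refine W_stay R (t := j+1) (by rw [hpc1]; simp [InW]) ?_ u (by omega)
    intro v hv
    exact hNC v (by omega) _
  exact descent R hfair hNC j hcj hstuck
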